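/- arXiv:2511.18217 — 4 statements merged into one kernel-verified Lean document; each statement's English description precedes it below -/
import Mathlib

section
/- Let A ⊆ ℝ^d be a compact totally disconnected set containing at least two points, and let S ⊆ ℝ^d be a nonempty Steiner set for A (a closed set with S ∪ A connected minimizing H¹ among all such closed sets) with H¹(S) < ∞. Then S is connected. -/
open MeasureTheory Metric Set

/-- `S` is a Steiner set for `A`: a closed set such that `S ∪ A` is connected, of minimal
one-dimensional Hausdorff measure among all such closed sets. -/
def IsSteinerSet {d : ℕ} (A S : Set (EuclideanSpace ℝ (Fin d))) : Prop :=
  IsClosed S ∧ IsConnected (S ∪ A) ∧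
    ∀ S' : Set (EuclideanSpace ℝ (Fin d)), IsClosed S' → IsConnected (S' ∪ A) →
      μH[1] S ≤ μH[1] S'

/-!
A point `a ∈ A \ S` has, since `A` is compact and totally disconnected, a neighbourhood in `A`
that is clopen in `A` and misses the closed set `S`. That piece is then clopen in `S ∪ A` as
well, so it splits the connected set `S ∪ A`. Hence `A ⊆ S`, and `S = S ∪ A` is connected.
-/

variable {X : Type*} [TopologicalSpace X]

theorem IsPreconnected.subset_of_inter_isOpen_eq_isClosed {s u c : Set X}
    (hs : IsPreconnected s) (hu : IsOpen u) (hc : IsClosed c) (hsu : s ∩ u = c)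
    (hc_ne : c.Nonempty) : s ⊆ c := by
  intro y hy
  by_contra hyc
  have hcover : s ⊆ u ∪ cᶜ := fun x hx ↦ by
    by_cases hxu : x ∈ u
    · exact Or.inl hxu
    · exact Or.inr fun hxc ↦ hxu (hsu.symm.subset hxc).2
  have hsu_ne : (s ∩ u).Nonempty := hsu ▸ hc_ne
  obtain ⟨x, hxs, hxu, hxc⟩ := hs u cᶜ hu hc.isOpen_compl hcover hsu_ne ⟨y, hy, hyc⟩
  exact hxc (hsu ▸ ⟨hxs, hxu⟩)

theorem IsCompact.exists_isOpen_isClosed_inter_subset_of_isTotallyDisconnected [T2Space X]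
    {A U : Set X} (hA : IsCompact A) (hAtd : IsTotallyDisconnected A) {a : X} (ha : a ∈ A)
    (hU : IsOpen U) (haU : a ∈ U) :
    ∃ W, IsOpen W ∧ a ∈ W ∧ IsClosed (A ∩ W) ∧ A ∩ W ⊆ U := by
  have : CompactSpace A := isCompact_iff_compactSpace.1 hA
  have : TotallyDisconnectedSpace A :=
    totallyDisconnectedSpace_subtype_iff.2 hAtd
  obtain ⟨V, hVclopen, haV, hVU⟩ :=
    compact_exists_isClopen_in_isOpen (x := (⟨a, ha⟩ : A)) (hU.preimage continuous_subtype_val)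
      haU
  obtain ⟨W, hW, rfl⟩ := isOpen_induced_iff.1 hVclopen.2
  refine ⟨W, hW, haV, ?_, ?_⟩
  · rw [← Subtype.image_preimage_coe]
    exact hA.isClosed.isClosedMap_subtype_val _ hVclopen.1
  · rw [← Subtype.image_preimage_coe]
    exact image_subset_iff.2 hVU

theorem subset_of_isPreconnected_union_of_isTotallyDisconnected [T2Space X] {A S : Set X}
    (hA : IsCompact A) (hAtd : IsTotallyDisconnected A) (hS : IsClosed S) (hSne : S.Nonempty)
    (hconn : IsPreconnected (S ∪ A)) : A ⊆ S := by
  intro a ha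
  by_contra haS
  obtain ⟨W, hW, haW, hAW, hAWS⟩ :=
    hA.exists_isOpen_isClosed_inter_subset_of_isTotallyDisconnected hAtd ha hS.isOpen_compl haS
  have hrel : (S ∪ A) ∩ (W ∩ Sᶜ) = A ∩ W := by
    ext x
    constructor
    · rintro ⟨hx | hx, hxW, hxS⟩
      exacts [absurd hx hxS, ⟨hx, hxW⟩]
    · rintro ⟨hxA, hxW⟩
      exact ⟨Or.inr hxA, hxW, hAWS ⟨hxA, hxW⟩⟩
  have hsub := hconn.subset_of_inter_isOpen_eq_isClosed (hW.inter hS.isOpen_compl) hAW hrel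
    ⟨a, ha, haW⟩
  obtain ⟨s, hs⟩ := hSne
  exact hAWS (hsub (Or.inl hs)) hs

theorem steiner_set_connected_of_totally_disconnected_general (d : ℕ)
    (A S : Set (EuclideanSpace ℝ (Fin d))) (hA : IsCompact A)
    (hAtd : IsTotallyDisconnected A)
    (hSne : S.Nonempty) (hS : IsSteinerSet A S) :
    IsConnected S := by
  obtain ⟨hScl, hconn, -⟩ := hS
  have hAS : A ⊆ S :=
    subset_of_isPreconnected_union_of_isTotallyDisconnected hA hAtd hScl hSne hconn.isPreconnected
  rwa [union_eq_self_of_subset_right hAS] at hconn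

theorem steiner_set_connected_of_totally_disconnected (d : ℕ)
    (A S : Set (EuclideanSpace ℝ (Fin d))) (hA : IsCompact A)
    (hAtd : IsTotallyDisconnected A) (hAnt : A.Nontrivial)
    (hSne : S.Nonempty) (hS : IsSteinerSet A S) (hfin : μH[1] S < ⊤) :
    IsConnected S :=
  steiner_set_connected_of_totally_disconnected_general d A S hA hAtd hSne hS
end

section
/- Let P = {(0,0), (1,0), (1/2, √3/2)} ⊆ ℝ² be the vertex set of an equilateral triangle with unit side. Then: (i) every compact connected set S ⊆ ℝ² with P ⊆ S satisfies H¹(S) ≥ √3; and (ii) there exists a compact connected set S ⊆ ℝ² with P ⊆ S and H¹(S) = √3 (so the Steiner tree for P has length √3). -/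
/-!
A compact connected set `S` of finite length is arcwise connected. Shortest `δ`-chains in `S`
between two points have `k * δ ≤ 4 * μH[1] S`, since the closed `δ / 2`-balls around their
even-indexed points are disjoint and each carries length `≥ δ / 2`; so their step paths are
uniformly Lipschitz up to an error `δ` and converge along an ultrafilter to a Lipschitz path. A
path with least Lipschitz constant is injective on `[0, 1]`, because cutting out a loop would lower
the constant.

Take an arc from `A` to `B`, and a path from `C` stopped at its first point `p` on that arc. This
gives three pieces of `S` that meet only at `p` and join it to `A`, `B` and `C`, so
`μH[1] S ≥ |pA| + |pB| + |pC| ≥ √3`. The three segments from the centre have total length `√3`.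
-/

open MeasureTheory Metric Set

/-- The vertices of an equilateral triangle with unit side length in `ℝ²`. -/
noncomputable def trianglePts : Set (EuclideanSpace ℝ (Fin 2)) :=
  {(WithLp.equiv 2 (Fin 2 → ℝ)).symm ![0, 0],
   (WithLp.equiv 2 (Fin 2 → ℝ)).symm ![1, 0],
   (WithLp.equiv 2 (Fin 2 → ℝ)).symm ![1 / 2, Real.sqrt 3 / 2]}

open Filter Topology

section Hausdorff

variable {X : Type*} [MetricSpace X] [MeasurableSpace X] [BorelSpace X] {S : Set X} {x z : X}

theorem IsPreconnected.ofReal_le_hausdorffMeasure_inter_closedBall (hS : IsPreconnected S)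
    (hx : x ∈ S) (hz : z ∈ S) {ρ : ℝ} (hρ : ρ ≤ dist x z) :
    ENNReal.ofReal ρ ≤ μH[1] (S ∩ closedBall x ρ) := by
  have hIcc : Icc 0 (dist x z) ⊆ dist x '' S :=
    (hS.image _ (continuous_const.dist continuous_id).continuousOn).Icc_subset
      ⟨x, hx, dist_self x⟩ ⟨z, hz, rfl⟩
  have hcover : Icc 0 ρ ⊆ dist x '' (S ∩ closedBall x ρ) := by
    intro v hv
    obtain ⟨w, hwS, rfl⟩ := hIcc ⟨hv.1, hv.2.trans hρ⟩
    exact ⟨w, ⟨hwS, mem_closedBall'.2 hv.2⟩, rfl⟩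
  calc ENNReal.ofReal ρ = μH[1] (Icc 0 ρ) := by
        rw [hausdorffMeasure_real, Real.volume_Icc, sub_zero]
    _ ≤ μH[1] (dist x '' (S ∩ closedBall x ρ)) := measure_mono hcover
    _ ≤ μH[1] (S ∩ closedBall x ρ) := by
      simpa using (LipschitzWith.dist_right x).hausdorffMeasure_image_le zero_le_one _

theorem IsPreconnected.edist_le_hausdorffMeasure (hS : IsPreconnected S) (hx : x ∈ S)
    (hz : z ∈ S) : edist x z ≤ μH[1] S := by
  rw [edist_dist]
  exact (hS.ofReal_le_hausdorffMeasure_inter_closedBall hx hz le_rfl).trans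
    (measure_mono inter_subset_left)

end Hausdorff

section Chains

variable {X : Type*} [MetricSpace X] {S : Set X} {δ : ℝ} {x y z : X} {k : ℕ} {c : ℕ → X}

structure IsDeltaChain (S : Set X) (δ : ℝ) (x y : X) (k : ℕ) (c : ℕ → X) : Prop where
  zero : c 0 = x
  last : c k = y
  mem : ∀ i ≤ k, c i ∈ S
  dist_succ_le : ∀ i < k, dist (c i) (c (i + 1)) ≤ δ

theorem IsDeltaChain.snoc (h : IsDeltaChain S δ x y k c) (hz : z ∈ S) (hyz : dist y z ≤ δ) :
    IsDeltaChain S δ x z (k + 1) (fun i => if i ≤ k then c i else z) where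
  zero := by simpa using h.zero
  last := by simp
  mem i _ := by split_ifs with hi; exacts [h.mem i hi, hz]
  dist_succ_le i hi := by
    rcases Nat.lt_or_ge i k with hik | hik
    · simpa [hik.le, Nat.succ_le_of_lt hik] using h.dist_succ_le i hik
    · obtain rfl : i = k := by omega
      simpa [h.last] using hyz

theorem IsPreconnected.exists_isDeltaChain (hS : IsPreconnected S) (hδ : 0 < δ) (hx : x ∈ S)
    (hy : y ∈ S) : ∃ k c, IsDeltaChain S δ x y k c := by
  let R : X → X → Prop := fun a b => b ∈ S ∧ dist a b ≤ δ
  have hR : Relation.ReflTransGen R x y := by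
    refine hS.induction₂' (fun a b => Relation.ReflTransGen R a b) (fun a ha => ?_)
      (fun _ _ _ _ _ _ => Relation.ReflTransGen.trans) hx hy
    filter_upwards [mem_nhdsWithin_of_mem_nhds (ball_mem_nhds a hδ), self_mem_nhdsWithin]
      with b hb hbS
    exact ⟨.single ⟨hbS, (mem_ball'.1 hb).le⟩, .single ⟨ha, (mem_ball.1 hb).le⟩⟩
  clear hy
  induction hR with
  | refl => exact ⟨0, fun _ => x, rfl, rfl, fun _ _ => hx, fun _ h => absurd h (Nat.not_lt_zero _)⟩
  | tail _ hbc ih =>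
    obtain ⟨k, c, hc⟩ := ih
    exact ⟨k + 1, _, hc.snoc hbc.1 hbc.2⟩

theorem IsDeltaChain.shortcut (h : IsDeltaChain S δ x y k c) {i d : ℕ} (hik : i + d + 1 ≤ k)
    (hd : dist (c i) (c (i + d + 1)) ≤ δ) :
    IsDeltaChain S δ x y (k - d) (fun m => if m ≤ i then c m else c (m + d)) where
  zero := by simpa using h.zero
  last := by simpa [show ¬ k - d ≤ i by omega, show k - d + d = k by omega] using h.last
  mem m hm := by split_ifs with hmi; exacts [h.mem m (by omega), h.mem _ (by omega)]
  dist_succ_le m hm := by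
    rcases lt_trichotomy m i with hmi | rfl | hmi
    · simpa [hmi.le, Nat.succ_le_of_lt hmi] using h.dist_succ_le m (by omega)
    · simpa [show m + 1 + d = m + d + 1 by omega] using hd
    · simpa [show ¬ m ≤ i by omega, show ¬ m + 1 ≤ i by omega, show m + 1 + d = m + d + 1 by omega]
        using h.dist_succ_le (m + d) (by omega)

/-- A shortest chain admits no shortcut. -/
theorem IsDeltaChain.exists_separated (h : IsDeltaChain S δ x y k c) :
    ∃ k c, IsDeltaChain S δ x y k c ∧ ∀ i j, i + 2 ≤ j → j ≤ k → δ < dist (c i) (c j) := by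
  classical
  have hex : ∃ k c, IsDeltaChain S δ x y k c := ⟨k, c, h⟩
  obtain ⟨c₀, hc₀⟩ := Nat.find_spec hex
  refine ⟨_, c₀, hc₀, fun i j hij hj => not_le.1 fun hle => ?_⟩
  obtain ⟨d, rfl⟩ : ∃ d, j = i + d + 1 := ⟨j - i - 1, by omega⟩
  exact Nat.find_min hex (show Nat.find hex - d < Nat.find hex by omega)
    ⟨_, hc₀.shortcut hj hle⟩

theorem IsPreconnected.card_mul_ofReal_le_hausdorffMeasure [MeasurableSpace X] [BorelSpace X]
    (hS : IsPreconnected S) (hSm : MeasurableSet S) (hx : x ∈ S) (hy : y ∈ S)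
    (hδ : δ ≤ dist x y) {ι : Type*} (J : Finset ι) {p : ι → X} (hp : ∀ i ∈ J, p i ∈ S)
    (hsep : (J : Set ι).Pairwise fun i j => δ < dist (p i) (p j)) :
    J.card * ENNReal.ofReal (δ / 2) ≤ μH[1] S := by
  let B : ι → Set X := fun i => S ∩ closedBall (p i) (δ / 2)
  have hB : ∀ i ∈ J, ENNReal.ofReal (δ / 2) ≤ μH[1] (B i) := fun i hi => by
    have := dist_triangle_left x y (p i)
    rcases le_total (δ / 2) (dist (p i) x) with hpx | hpx
    · exact hS.ofReal_le_hausdorffMeasure_inter_closedBall (hp i hi) hx hpx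
    · exact hS.ofReal_le_hausdorffMeasure_inter_closedBall (hp i hi) hy (by linarith)
  have hdisj : (J : Set ι).PairwiseDisjoint B := fun i hi j hj hij =>
    (closedBall_disjoint_closedBall (by linarith [hsep hi hj hij])).mono inter_subset_right
      inter_subset_right
  calc J.card * ENNReal.ofReal (δ / 2) = ∑ _i ∈ J, ENNReal.ofReal (δ / 2) := by simp
    _ ≤ ∑ i ∈ J, μH[1] (B i) := Finset.sum_le_sum hB
    _ = μH[1] (⋃ i ∈ J, B i) :=
      (measure_biUnion_finset hdisj fun i _ => hSm.inter measurableSet_closedBall).symm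
    _ ≤ μH[1] S := measure_mono (iUnion₂_subset fun i _ => inter_subset_left)

theorem IsDeltaChain.ofReal_mul_le_four_mul_hausdorffMeasure [MeasurableSpace X] [BorelSpace X]
    (h : IsDeltaChain S δ x y k c) (hS : IsPreconnected S) (hSm : MeasurableSet S)
    (hδ : 0 ≤ δ) (hδxy : δ ≤ dist x y)
    (hsep : ∀ i j, i + 2 ≤ j → j ≤ k → δ < dist (c i) (c j)) :
    ENNReal.ofReal (k * δ) ≤ 4 * μH[1] S := by
  have hJ : ∀ m ∈ Finset.range (k / 2 + 1), 2 * m ≤ k := fun m hm => by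
    rw [Finset.mem_range] at hm; omega
  have hpack := hS.card_mul_ofReal_le_hausdorffMeasure hSm (h.zero ▸ h.mem 0 k.zero_le)
    (h.last ▸ h.mem k le_rfl) hδxy (Finset.range (k / 2 + 1)) (p := fun m => c (2 * m))
    (fun m hm => h.mem _ (hJ m hm)) fun m hm m' hm' hne => by
      rcases Nat.lt_or_gt_of_ne hne with hlt | hlt
      · exact hsep _ _ (by omega) (hJ m' hm')
      · exact dist_comm (c _) (c _) ▸ hsep _ _ (by omega) (hJ m hm)
  calc ENNReal.ofReal (k * δ) ≤ ENNReal.ofReal (4 * ((k / 2 + 1 : ℕ) * (δ / 2))) := by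
        refine ENNReal.ofReal_le_ofReal ?_
        have : (k : ℝ) ≤ 2 * (k / 2 + 1 : ℕ) := by exact_mod_cast (by omega : k ≤ 2 * (k / 2 + 1))
        nlinarith
    _ = 4 * ((Finset.range (k / 2 + 1)).card * ENNReal.ofReal (δ / 2)) := by
        rw [ENNReal.ofReal_mul (by norm_num), ENNReal.ofReal_mul (by positivity),
          ENNReal.ofReal_natCast, Finset.card_range]
        norm_num
    _ ≤ 4 * μH[1] S := by gcongr

noncomputable def chainPath (k : ℕ) (c : ℕ → X) (t : ℝ) : X := c (min k ⌊k * t⌋₊)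

theorem natCast_min_floor_sub_le (k : ℕ) {s t : ℝ} (hst : s ≤ t) :
    ((min k ⌊k * t⌋₊ : ℕ) : ℝ) - (min k ⌊k * s⌋₊ : ℕ) ≤ k * (t - s) + 1 := by
  have hks : (k : ℝ) * s ≤ k * t := by gcongr
  rcases le_total k ⌊k * s⌋₊ with hs | hs
  · have : min k ⌊k * t⌋₊ ≤ min k ⌊k * s⌋₊ := by omega
    have : ((min k ⌊k * t⌋₊ : ℕ) : ℝ) ≤ (min k ⌊k * s⌋₊ : ℕ) := by exact_mod_cast this
    nlinarith
  · rw [min_eq_right hs]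
    have hfs := Nat.lt_floor_add_one ((k : ℝ) * s)
    have hmin : ((min k ⌊k * t⌋₊ : ℕ) : ℝ) ≤ ⌊k * t⌋₊ := by exact_mod_cast min_le_right _ _
    rcases le_total 0 ((k : ℝ) * t) with ht | ht
    · linarith [Nat.floor_le ht]
    · rw [Nat.floor_of_nonpos ht, min_zero, Nat.cast_zero]
      linarith [(⌊(k : ℝ) * s⌋₊).cast_nonneg (α := ℝ)]

theorem IsDeltaChain.dist_chainPath_le (h : IsDeltaChain S δ x y k c) (hδ : 0 ≤ δ) (s t : ℝ) :
    dist (chainPath k c s) (chainPath k c t) ≤ k * δ * dist s t + δ := by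
  wlog hst : s ≤ t generalizing s t
  · rw [dist_comm, dist_comm s]; exact this t s (le_of_not_ge hst)
  have hij : min k ⌊k * s⌋₊ ≤ min k ⌊k * t⌋₊ := by gcongr
  calc dist (chainPath k c s) (chainPath k c t)
      ≤ ∑ i ∈ Finset.Ico (min k ⌊k * s⌋₊) (min k ⌊k * t⌋₊), dist (c i) (c (i + 1)) :=
        dist_le_Ico_sum_dist c hij
    _ ≤ ((min k ⌊k * t⌋₊ - min k ⌊k * s⌋₊ : ℕ) : ℝ) * δ := by
        refine (Finset.sum_le_card_nsmul _ _ _ fun i hi => ?_).trans_eq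
          (by rw [nsmul_eq_mul, Nat.card_Ico])
        exact h.dist_succ_le i ((Finset.mem_Ico.1 hi).2.trans_le (min_le_left _ _))
    _ ≤ (k * (t - s) + 1) * δ := by
        rw [Nat.cast_sub hij]
        exact mul_le_mul_of_nonneg_right (natCast_min_floor_sub_le k hst) hδ
    _ = k * δ * dist s t + δ := by rw [Real.dist_eq, abs_of_nonpos (by linarith)]; ring

end Chains

section Paths

variable {X : Type*} [MetricSpace X] {S : Set X} {x y : X}

/-- The additive error `ε` lets step paths through `δ`-chains qualify, with `ε = δ`. -/
structure IsLipschitzPathIn (S : Set X) (x y : X) (L ε : ℝ) (γ : ℝ → X) : Prop where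
  dist_le : ∀ s t, dist (γ s) (γ t) ≤ L * dist s t + ε
  map_zero : γ 0 = x
  map_one : γ 1 = y
  mem : ∀ t, γ t ∈ S

theorem IsLipschitzPathIn.mono {L ε L' ε' : ℝ} {γ : ℝ → X} (h : IsLipschitzPathIn S x y L ε γ)
    (hL : L ≤ L') (hε : ε ≤ ε') : IsLipschitzPathIn S x y L' ε' γ :=
  { h with dist_le := fun s t => (h.dist_le s t).trans (by gcongr) }

theorem IsDeltaChain.isLipschitzPathIn_chainPath {δ : ℝ} {k : ℕ} {c : ℕ → X}
    (h : IsDeltaChain S δ x y k c) (hδ : 0 ≤ δ) :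
    IsLipschitzPathIn S x y (k * δ) δ (chainPath k c) where
  dist_le := h.dist_chainPath_le hδ
  map_zero := by simpa [chainPath] using h.zero
  map_one := by simpa [chainPath] using h.last
  mem _ := h.mem _ (min_le_left _ _)

theorem IsLipschitzPathIn.continuous {ℓ : ℝ} {γ : ℝ → X} (h : IsLipschitzPathIn S x y ℓ 0 γ) :
    Continuous γ :=
  (LipschitzWith.of_dist_le_mul (K := ℓ.toNNReal) fun s t =>
    (add_zero (ℓ * dist s t) ▸ h.dist_le s t).trans (by gcongr; exact ℓ.le_coe_toNNReal)).continuous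

theorem IsCompact.exists_isLipschitzPathIn_of_tendsto (hS : IsCompact S) {α : Type*}
    {l : Filter α} [l.NeBot] {f : α → ℝ → X} {L ε : α → ℝ} {ℓ : ℝ}
    (hL : Tendsto L l (𝓝 ℓ)) (hε : Tendsto ε l (𝓝 0))
    (hf : ∀ᶠ a in l, IsLipschitzPathIn S x y (L a) (ε a) (f a)) :
    ∃ γ, IsLipschitzPathIn S x y ℓ 0 γ := by
  set 𝒰 := Ultrafilter.of l
  have h𝒰 : (𝒰 : Filter α) ≤ l := Ultrafilter.of_le l
  have hlim : ∀ t, ∃ z ∈ S, Tendsto (fun a => f a t) 𝒰 (𝓝 z) := fun t =>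
    hS.ultrafilter_le_nhds (𝒰.map (f · t)) (le_principal_iff.2 (h𝒰 (hf.mono fun a ha => ha.mem t)))
  choose γ hγS hγ using hlim
  have hf𝒰 := hf.filter_mono h𝒰
  have hconst : ∀ {t} {z : X}, (∀ a, IsLipschitzPathIn S x y (L a) (ε a) (f a) → f a t = z) →
      γ t = z := fun hz =>
    tendsto_nhds_unique (hγ _) (tendsto_const_nhds.congr' (hf𝒰.mono fun a ha => (hz a ha).symm))
  refine ⟨γ, fun s t => ?_, hconst fun a ha => ha.map_zero, hconst fun a ha => ha.map_one, hγS⟩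
  have hbound := ((hL.mul_const (dist s t)).add hε).mono_left h𝒰
  rw [add_zero] at hbound ⊢
  exact le_of_tendsto_of_tendsto ((hγ s).dist (hγ t)) hbound (hf𝒰.mono fun a ha => ha.dist_le s t)

theorem IsPreconnected.exists_isLipschitzPathIn [MeasurableSpace X] [BorelSpace X]
    (hS : IsPreconnected S) (hSc : IsCompact S) (hfin : μH[1] S ≠ ⊤) (hx : x ∈ S) (hy : y ∈ S)
    (hxy : x ≠ y) : ∃ ℓ γ, IsLipschitzPathIn S x y ℓ 0 γ := by
  have hchain : ∀ δ ∈ Ioc 0 (dist x y), ∃ k c, IsDeltaChain S δ x y k c ∧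
      ENNReal.ofReal (k * δ) ≤ 4 * μH[1] S := fun δ hδ => by
    obtain ⟨k₀, c₀, h₀⟩ := hS.exists_isDeltaChain hδ.1 hx hy
    obtain ⟨k, c, hc, hsep⟩ := h₀.exists_separated
    exact ⟨k, c, hc, hc.ofReal_mul_le_four_mul_hausdorffMeasure hS hSc.measurableSet hδ.1.le
      hδ.2 hsep⟩
  have : Nonempty X := ⟨x⟩
  choose! k c hc hlen using hchain
  refine ⟨_, hSc.exists_isLipschitzPathIn_of_tendsto (l := 𝓝[>] 0)
    (f := fun δ => chainPath (k δ) (c δ)) (L := fun _ => 4 * (μH[1] S).toReal) tendsto_const_nhds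
    nhdsWithin_le_nhds ?_⟩
  filter_upwards [Ioc_mem_nhdsGT (dist_pos.2 hxy)] with δ hδ
  refine ((hc δ hδ).isLipschitzPathIn_chainPath hδ.1.le).mono ?_ le_rfl
  have := (ENNReal.ofReal_le_iff_le_toReal (ENNReal.mul_ne_top ENNReal.ofNat_ne_top hfin)).1
    (hlen δ hδ)
  rwa [ENNReal.toReal_mul, ENNReal.toReal_ofNat] at this

theorem IsLipschitzPathIn.nonneg {L : ℝ} {γ : ℝ → X} (h : IsLipschitzPathIn S x y L 0 γ) :
    0 ≤ L := by
  simpa [h.map_zero, h.map_one] using dist_nonneg.trans (h.dist_le 0 1)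

theorem IsCompact.exists_isLeast_isLipschitzPathIn (hS : IsCompact S)
    (h : ∃ L γ, IsLipschitzPathIn S x y L 0 γ) :
    ∃ ℓ, IsLeast {L | ∃ γ, IsLipschitzPathIn S x y L 0 γ} ℓ := by
  set A := {L | ∃ γ, IsLipschitzPathIn S x y L 0 γ}
  have hA : A.Nonempty := h
  have hAbdd : BddBelow A := ⟨0, fun L ⟨_, hγ⟩ => hγ.nonneg⟩
  refine ⟨sInf A, ?_, fun L hL => csInf_le hAbdd hL⟩
  have : Nonempty X := ⟨x⟩
  choose! f hf using fun L (hL : L ∈ A) => hL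
  refine hS.exists_isLipschitzPathIn_of_tendsto (l := 𝓝[>] (sInf A)) (f := f) (L := id)
    (ε := fun _ => 0) nhdsWithin_le_nhds tendsto_const_nhds ?_
  filter_upwards [self_mem_nhdsWithin] with L hL
  obtain ⟨L₀, ⟨γ, hγ⟩, hL₀⟩ := exists_lt_of_csInf_lt hA hL
  exact hf L ⟨γ, hγ.mono hL₀.le le_rfl⟩

/-- The reparametrization of a path that jumps over the loop `γ|[a, b]` when `γ a = γ b`. -/
noncomputable def skipLoop (a b u : ℝ) : ℝ := if u ≤ a then u else u + (b - a)

theorem dist_comp_skipLoop_le {ℓ a b : ℝ} {γ : ℝ → X}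
    (hγ : ∀ s t, dist (γ s) (γ t) ≤ ℓ * dist s t) (heq : γ a = γ b) (s t : ℝ) :
    dist (γ (skipLoop a b s)) (γ (skipLoop a b t)) ≤ ℓ * dist s t := by
  wlog hst : s ≤ t generalizing s t
  · rw [dist_comm, dist_comm s]; exact this t s (le_of_not_ge hst)
  have hts : dist s t = t - s := by rw [Real.dist_eq, abs_of_nonpos (by linarith)]; ring
  by_cases hta : t ≤ a
  · simpa [skipLoop, hta, hst.trans hta] using hγ s t
  by_cases hsa : s ≤ a
  · simp only [skipLoop, hsa, hta, if_true, if_false]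
    calc dist (γ s) (γ (t + (b - a))) ≤ dist (γ s) (γ a) + dist (γ b) (γ (t + (b - a))) :=
          heq ▸ dist_triangle _ _ _
      _ ≤ ℓ * dist s a + ℓ * dist b (t + (b - a)) := add_le_add (hγ _ _) (hγ _ _)
      _ = ℓ * dist s t := by
          rw [Real.dist_eq, Real.dist_eq, abs_of_nonpos (by linarith),
            abs_of_nonpos (by linarith), hts]
          ring
  · simpa [skipLoop, hsa, hta] using hγ (s + (b - a)) (t + (b - a))

theorem IsLipschitzPathIn.skip {ℓ a b : ℝ} {γ : ℝ → X} (h : IsLipschitzPathIn S x y ℓ 0 γ)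
    (ha : 0 ≤ a) (hb : b ≤ 1) (heq : γ a = γ b) :
    IsLipschitzPathIn S x y ((1 - (b - a)) * ℓ) 0
      (fun t => γ (skipLoop a b ((1 - (b - a)) * t))) where
  dist_le s t := by
    refine (dist_comp_skipLoop_le (fun s t => by simpa using h.dist_le s t) heq
      ((1 - (b - a)) * s) ((1 - (b - a)) * t)).trans_eq ?_
    rw [Real.dist_eq, Real.dist_eq, ← mul_sub, abs_mul, abs_of_nonneg (by linarith)]
    ring
  map_zero := by simpa [skipLoop, ha] using h.map_zero
  map_one := by
    rw [mul_one, skipLoop]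
    split_ifs with hle
    · obtain rfl : b = 1 := by linarith
      rw [show 1 - (1 - a) = a by ring, heq, h.map_one]
    · rw [show 1 - (b - a) + (b - a) = 1 by ring, h.map_one]
  mem _ := h.mem _

theorem IsLipschitzPathIn.injOn_of_mem_lowerBounds {ℓ : ℝ} {γ : ℝ → X}
    (h : IsLipschitzPathIn S x y ℓ 0 γ)
    (hmin : ℓ ∈ lowerBounds {L | ∃ γ, IsLipschitzPathIn S x y L 0 γ}) (hxy : x ≠ y) :
    InjOn γ (Icc 0 1) := by
  have hpos : 0 < ℓ := h.nonneg.lt_of_ne fun hℓ => hxy <| by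
    simpa [h.map_zero, h.map_one, ← hℓ] using h.dist_le 0 1
  have key : ∀ a ∈ Icc (0 : ℝ) 1, ∀ b ∈ Icc (0 : ℝ) 1, a < b → γ a ≠ γ b := fun a ha b hb hab heq =>
    by nlinarith [hmin ⟨_, h.skip ha.1 hb.2 heq⟩]
  intro a ha b hb heq
  rcases lt_trichotomy a b with hab | rfl | hba
  exacts [absurd heq (key a ha b hb hab), rfl, absurd heq.symm (key b hb a ha hba)]

theorem IsPreconnected.exists_isLipschitzPathIn_injOn [MeasurableSpace X] [BorelSpace X]
    (hS : IsPreconnected S) (hSc : IsCompact S) (hfin : μH[1] S ≠ ⊤) (hx : x ∈ S) (hy : y ∈ S)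
    (hxy : x ≠ y) : ∃ ℓ γ, IsLipschitzPathIn S x y ℓ 0 γ ∧ InjOn γ (Icc 0 1) := by
  obtain ⟨ℓ, ⟨γ, hγ⟩, hmin⟩ :=
    hSc.exists_isLeast_isLipschitzPathIn (hS.exists_isLipschitzPathIn hSc hfin hx hy hxy)
  exact ⟨ℓ, γ, hγ, hγ.injOn_of_mem_lowerBounds hmin hxy⟩

end Paths

theorem Set.InjOn.image_Icc_inter_image_Icc_subset {α β : Type*} [LinearOrder α] {f : α → β}
    {a b s : α} (hf : InjOn f (Icc a b)) (hs : s ∈ Icc a b) :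
    f '' Icc a s ∩ f '' Icc s b ⊆ {f s} := by
  rintro _ ⟨⟨u, hu, rfl⟩, ⟨v, hv, huv⟩⟩
  obtain rfl := hf ⟨hv.1.trans' hs.1, hv.2⟩ ⟨hu.1, hu.2.trans hs.2⟩ huv
  rw [le_antisymm hu.2 hv.1]
  rfl

theorem ContinuousOn.exists_mem_image_Icc_inter_subset {X : Type*} [TopologicalSpace X]
    {η : ℝ → X} {a b : ℝ} (hη : ContinuousOn η (Icc a b)) (hab : a ≤ b) {K : Set X}
    (hK : IsClosed K) (hb : η b ∈ K) :
    ∃ τ ∈ Icc a b, η τ ∈ K ∧ η '' Icc a τ ∩ K ⊆ {η τ} := by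
  set T := Icc a b ∩ η ⁻¹' K
  have hT : IsClosed T := hη.preimage_isClosed_of_isClosed isClosed_Icc hK
  have hτ : sInf T ∈ T := hT.csInf_mem ⟨b, ⟨hab, le_rfl⟩, hb⟩ ⟨a, fun t ht => ht.1.1⟩
  refine ⟨sInf T, hτ.1, hτ.2, ?_⟩
  rintro _ ⟨⟨t, ht, rfl⟩, htK⟩
  rw [le_antisymm ht.2 (csInf_le ⟨a, fun t ht => ht.1.1⟩ ⟨⟨ht.1, ht.2.trans hτ.1.2⟩, htK⟩)]
  rfl

theorem IsPreconnected.exists_edist_add_edist_add_edist_le_hausdorffMeasure {X : Type*}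
    [MetricSpace X] [MeasurableSpace X] [BorelSpace X] {S : Set X} {a b c : X}
    (hS : IsPreconnected S) (hSc : IsCompact S) (ha : a ∈ S) (hb : b ∈ S) (hc : c ∈ S)
    (hab : a ≠ b) (hca : c ≠ a) : ∃ p, edist a p + edist b p + edist c p ≤ μH[1] S := by
  rcases eq_or_ne (μH[1] S) ⊤ with htop | hfin
  · exact ⟨a, by simp [htop]⟩
  obtain ⟨_, γ, hγ, hinj⟩ := hS.exists_isLipschitzPathIn_injOn hSc hfin ha hb hab
  obtain ⟨_, η, hη, -⟩ := hS.exists_isLipschitzPathIn_injOn hSc hfin hc ha hca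
  have hγc := hγ.continuous
  have hηc := hη.continuous
  obtain ⟨τ, hτ, ⟨s, hs, hsτ⟩, hfirst⟩ := hηc.continuousOn.exists_mem_image_Icc_inter_subset
    zero_le_one (isCompact_Icc.image hγc).isClosed
    ⟨0, ⟨le_rfl, zero_le_one⟩, hγ.map_zero.trans hη.map_one.symm⟩
  have : NullSingletonClass (μH[1] : Measure X) := Measure.nullSingletonClass_hausdorff X one_pos
  have hsplit : μH[1] (γ '' Icc 0 s) + μH[1] (γ '' Icc s 1) = μH[1] (γ '' Icc 0 1) := by
    rw [← Icc_union_Icc_eq_Icc hs.1 hs.2, image_union, measure_union₀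
      (isCompact_Icc.image hγc).isClosed.measurableSet.nullMeasurableSet
      (measure_mono_null (hinj.image_Icc_inter_image_Icc_subset hs) (measure_singleton _))]
  have hglue : μH[1] (η '' Icc 0 τ) + μH[1] (γ '' Icc 0 1) ≤ μH[1] S := by
    rw [← measure_union₀ (isCompact_Icc.image hγc).isClosed.measurableSet.nullMeasurableSet
      (measure_mono_null hfirst (measure_singleton _))]
    exact measure_mono (union_subset (image_subset_iff.2 fun t _ => hη.mem t)
      (image_subset_iff.2 fun t _ => hγ.mem t))
  refine ⟨γ s, ?_⟩
  calc edist a (γ s) + edist b (γ s) + edist c (γ s)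
      ≤ μH[1] (γ '' Icc 0 s) + μH[1] (γ '' Icc s 1) + μH[1] (η '' Icc 0 τ) := by
        gcongr
        · exact (isPreconnected_Icc.image _ hγc.continuousOn).edist_le_hausdorffMeasure
            ⟨0, ⟨le_rfl, hs.1⟩, hγ.map_zero⟩ ⟨s, ⟨hs.1, le_rfl⟩, rfl⟩
        · exact (isPreconnected_Icc.image _ hγc.continuousOn).edist_le_hausdorffMeasure
            ⟨1, ⟨hs.2, le_rfl⟩, hγ.map_one⟩ ⟨s, ⟨le_rfl, hs.2⟩, rfl⟩
        · exact (isPreconnected_Icc.image _ hηc.continuousOn).edist_le_hausdorffMeasure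
            ⟨0, ⟨le_rfl, hτ.1⟩, hη.map_zero⟩ ⟨τ, ⟨hτ.1, le_rfl⟩, hsτ.symm⟩
    _ = μH[1] (η '' Icc 0 τ) + μH[1] (γ '' Icc 0 1) := by rw [hsplit, add_comm]
    _ ≤ μH[1] S := hglue

theorem trianglePts_eq : trianglePts = {!₂[0, 0], !₂[1, 0], !₂[1 / 2, √3 / 2]} := rfl

theorem dist_toLp_fin_two (a b : ℝ) (p : EuclideanSpace ℝ (Fin 2)) :
    dist !₂[a, b] p = √((a - p 0) ^ 2 + (b - p 1) ^ 2) := by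
  simp [EuclideanSpace.dist_eq, Fin.sum_univ_two, Real.dist_eq, sq_abs]

theorem mul_add_mul_le_sqrt {u v : ℝ} (h : u ^ 2 + v ^ 2 = 1) (x y : ℝ) :
    u * x + v * y ≤ √(x ^ 2 + y ^ 2) :=
  (le_abs_self _).trans (Real.abs_le_sqrt (by nlinarith [sq_nonneg (u * y - v * x)]))

/-- The unit vectors pointing from the centre to the three vertices sum to zero, so the three
linear lower bounds for the distances add up to a constant. -/
theorem sqrt_three_le_dist_add_dist_add_dist (p : EuclideanSpace ℝ (Fin 2)) :
    √3 ≤ dist !₂[0, 0] p + dist !₂[1, 0] p + dist !₂[1 / 2, √3 / 2] p := by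
  have h3 : √3 ^ 2 = 3 := Real.sq_sqrt zero_le_three
  simp only [dist_toLp_fin_two]
  have hA := mul_add_mul_le_sqrt (u := -√3 / 2) (v := -1 / 2) (by linear_combination h3 / 4)
    (0 - p 0) (0 - p 1)
  have hB := mul_add_mul_le_sqrt (u := √3 / 2) (v := -1 / 2) (by linear_combination h3 / 4)
    (1 - p 0) (0 - p 1)
  have hC := mul_add_mul_le_sqrt (u := 0) (v := 1) (by norm_num) (1 / 2 - p 0) (√3 / 2 - p 1)
  linarith

theorem ofReal_sqrt_three_le_hausdorffMeasure {S : Set (EuclideanSpace ℝ (Fin 2))}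
    (hSc : IsCompact S) (hS : IsPreconnected S) (hsub : trianglePts ⊆ S) :
    ENNReal.ofReal √3 ≤ μH[1] S := by
  obtain ⟨p, hp⟩ := hS.exists_edist_add_edist_add_edist_le_hausdorffMeasure hSc
    (hsub (Or.inl rfl)) (hsub (Or.inr (Or.inl rfl))) (hsub (Or.inr (Or.inr rfl)))
    (fun h => by simpa using congrArg (· 0) h) (fun h => by simpa using congrArg (· 0) h)
  calc ENNReal.ofReal √3
      ≤ ENNReal.ofReal (dist !₂[0, 0] p + dist !₂[1, 0] p + dist !₂[1 / 2, √3 / 2] p) :=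
        ENNReal.ofReal_le_ofReal (sqrt_three_le_dist_add_dist_add_dist p)
    _ = _ := by simp only [edist_dist, ENNReal.ofReal_add, dist_nonneg, add_nonneg]; rfl
    _ ≤ μH[1] S := hp

noncomputable def fermatPoint : EuclideanSpace ℝ (Fin 2) := !₂[1 / 2, √3 / 6]

noncomputable def fermatTree : Set (EuclideanSpace ℝ (Fin 2)) :=
  ⋃ z ∈ trianglePts, segment ℝ fermatPoint z

theorem trianglePts_subset_fermatTree : trianglePts ⊆ fermatTree :=
  fun _ hz => mem_biUnion hz (right_mem_segment _ _ _)

theorem isCompact_fermatTree : IsCompact fermatTree :=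
  (((finite_singleton _).insert _).insert _).isCompact_biUnion fun z _ =>
    convexHull_pair (𝕜 := ℝ) _ z ▸ (toFinite _).isCompact_convexHull ℝ

theorem isConnected_fermatTree : IsConnected fermatTree := by
  refine (StarConvex.isPathConnected (a := fermatPoint) ?_ ?_).isConnected
  · exact starConvex_iUnion₂ fun z _ => (convex_segment _ z).starConvex (left_mem_segment ℝ _ z)
  · exact mem_biUnion (x := !₂[0, 0]) (Or.inl rfl) (left_mem_segment ℝ _ _)

theorem dist_fermatPoint {z : EuclideanSpace ℝ (Fin 2)} (hz : z ∈ trianglePts) :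
    dist fermatPoint z = √3 / 3 := by
  have h3 : √3 ^ 2 = 3 := Real.sq_sqrt zero_le_three
  rw [trianglePts_eq] at hz
  rcases hz with rfl | rfl | rfl <;>
  · rw [fermatPoint, dist_toLp_fin_two, Real.sqrt_eq_iff_mul_self_eq_of_pos (by positivity)]
    simp
    linarith

theorem hausdorffMeasure_fermatTree_le : μH[1] fermatTree ≤ ENNReal.ofReal √3 := by
  have hseg : ∀ z ∈ trianglePts, μH[1] (segment ℝ fermatPoint z) = ENNReal.ofReal (√3 / 3) :=
    fun z hz => by rw [hausdorffMeasure_segment, edist_dist, dist_fermatPoint hz]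
  have hsum : ENNReal.ofReal (√3 / 3) + (ENNReal.ofReal (√3 / 3) + ENNReal.ofReal (√3 / 3)) =
      ENNReal.ofReal √3 := by
    rw [← ENNReal.ofReal_add (by positivity) (by positivity),
      ← ENNReal.ofReal_add (by positivity) (by positivity)]
    ring_nf
  calc μH[1] fermatTree
      ≤ μH[1] (segment ℝ fermatPoint !₂[0, 0]) + (μH[1] (segment ℝ fermatPoint !₂[1, 0])
          + μH[1] (segment ℝ fermatPoint !₂[1 / 2, √3 / 2])) := by
        simp only [fermatTree, trianglePts_eq, biUnion_insert, biUnion_singleton]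
        exact (measure_union_le _ _).trans (by gcongr; exact measure_union_le _ _)
    _ = ENNReal.ofReal √3 := by
        rw [hseg !₂[0, 0] (Or.inl rfl), hseg !₂[1, 0] (Or.inr (Or.inl rfl)),
          hseg !₂[1 / 2, √3 / 2] (Or.inr (Or.inr rfl)), hsum]

theorem steiner_tree_equilateral_triangle :
    (∀ S : Set (EuclideanSpace ℝ (Fin 2)), IsCompact S → IsConnected S → trianglePts ⊆ S →
      ENNReal.ofReal (Real.sqrt 3) ≤ μH[1] S) ∧
    (∃ S : Set (EuclideanSpace ℝ (Fin 2)), IsCompact S ∧ IsConnected S ∧ trianglePts ⊆ S ∧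
      μH[1] S = ENNReal.ofReal (Real.sqrt 3)) :=
  ⟨fun _ hSc hS hsub => ofReal_sqrt_three_le_hausdorffMeasure hSc hS.isPreconnected hsub,
    fermatTree, isCompact_fermatTree, isConnected_fermatTree, trianglePts_subset_fermatTree,
    hausdorffMeasure_fermatTree_le.antisymm (ofReal_sqrt_three_le_hausdorffMeasure
      isCompact_fermatTree isConnected_fermatTree.isPreconnected trianglePts_subset_fermatTree)⟩
end

section
/- For every finite nonempty set P ⊆ [0,1]² ⊆ ℝ² with #P = n, there exists a compact connected set S ⊆ ℝ² with P ⊆ S and H¹(S) ≤ √(2n) + 7/4. (In particular, the maximal possible length L(n) of a Steiner tree for n points in the unit square grows at most like a constant times √n.) -/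
/-!
Comb construction. Lay `k` horizontal unit segments at heights `(2j+1)/(2k)`, joined by a
vertical spine of length `1 - 1/k` through their midpoints, and connect each point of `P`
vertically to the nearest horizontal segment, at distance at most `1/(2k)`. The total length is
at most `1 - 1/k + k + n/(2k) = 1 + 2s + ((k - s)² - 1)/k` with `s = √(2n)/2`, which is at most
`√(2n) + 1` once `k = ⌈s⌉`.
-/

open MeasureTheory Metric Set
open scoped ENNReal

/-- The closed unit square `[0,1]² ⊆ ℝ²`. -/
def unitSquare : Set (EuclideanSpace ℝ (Fin 2)) :=
  {x | ∀ i, x i ∈ Set.Icc (0 : ℝ) 1}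

theorem IsConnected.union_biUnion {X ι : Type*} [TopologicalSpace X] {T : Set X} {s : Set ι}
    {A : ι → Set X} (hT : IsConnected T) (hA : ∀ i ∈ s, IsPreconnected (A i))
    (hTA : ∀ i ∈ s, (T ∩ A i).Nonempty) : IsConnected (T ∪ ⋃ i ∈ s, A i) := by
  obtain ⟨x, hx⟩ := hT.nonempty
  refine ⟨⟨x, .inl hx⟩, isPreconnected_of_forall x fun y hy => ?_⟩
  rcases hy with hy | hy
  · exact ⟨T, subset_union_left, hx, hy, hT.isPreconnected⟩
  · obtain ⟨i, hi, hy⟩ := mem_iUnion₂.1 hy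
    exact ⟨T ∪ A i, union_subset_union_right _ (subset_biUnion_of_mem hi), .inl hx, .inr hy,
      hT.isPreconnected.union' (hTA i hi) (hA i hi)⟩

theorem isConnected_image_uIcc {X : Type*} [TopologicalSpace X] {f : ℝ → X} (hf : Continuous f)
    (a b : ℝ) : IsConnected (f '' uIcc a b) :=
  (isConnected_Icc inf_le_sup).image f hf.continuousOn

theorem Isometry.hausdorffMeasure_image_uIcc {X : Type*} [EMetricSpace X] [MeasurableSpace X]
    [BorelSpace X] {f : ℝ → X} (hf : Isometry f) (a b : ℝ) :
    μH[1] (f '' uIcc a b) = ENNReal.ofReal |b - a| := by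
  rw [hf.hausdorffMeasure_image (.inl zero_le_one), hausdorffMeasure_real, Real.volume_interval]

namespace EuclideanSpace

theorem isometry_horizontal (c : ℝ) : Isometry fun x : ℝ => !₂[x, c] :=
  .of_dist_eq fun x y => by
    simp [EuclideanSpace.dist_eq, Fin.sum_univ_two, Real.dist_eq, Real.sqrt_sq_eq_abs]

theorem isometry_vertical (c : ℝ) : Isometry fun y : ℝ => !₂[c, y] :=
  .of_dist_eq fun x y => by
    simp [EuclideanSpace.dist_eq, Fin.sum_univ_two, Real.dist_eq, Real.sqrt_sq_eq_abs]

theorem vec2_eta (p : EuclideanSpace ℝ (Fin 2)) : !₂[p 0, p 1] = p := by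
  ext i
  fin_cases i <;> rfl

end EuclideanSpace

open EuclideanSpace

noncomputable def combHeight (k j : ℕ) : ℝ := (2 * j + 1) / (2 * k)

theorem combHeight_mono (k : ℕ) : Monotone (combHeight k) := fun i j hij => by
  unfold combHeight
  gcongr

theorem exists_abs_sub_combHeight_le {k : ℕ} (hk : 0 < k) {y : ℝ} (hy : y ∈ Icc 0 1) :
    ∃ j < k, |y - combHeight k j| ≤ 1 / (2 * k) := by
  have hk' : (0 : ℝ) < k := Nat.cast_pos.2 hk
  have hky : 0 ≤ (k : ℝ) * y := mul_nonneg hk'.le hy.1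
  obtain ⟨j, hjk, hj⟩ : ∃ j < k, (j : ℝ) ≤ k * y ∧ k * y ≤ j + 1 := by
    rcases lt_or_ge ⌊k * y⌋₊ k with h | h
    · exact ⟨_, h, Nat.floor_le hky, (Nat.lt_floor_add_one _).le⟩
    · have : (k : ℝ) ≤ k * y := (Nat.le_floor_iff hky).1 h
      refine ⟨k - 1, Nat.sub_lt hk one_pos, ?_⟩
      rw [Nat.cast_pred hk]
      constructor <;> nlinarith [hy.2]
  refine ⟨j, hjk, ?_⟩
  have : y - combHeight k j = (2 * (k * y) - (2 * j + 1)) / (2 * k) := by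
    rw [combHeight]
    field_simp
  have h2k : (0 : ℝ) < 2 * k := by linarith
  rw [this, abs_div, abs_of_pos h2k, div_le_div_iff_of_pos_right h2k, abs_le]
  constructor <;> linarith

def comb (k : ℕ) : Set (EuclideanSpace ℝ (Fin 2)) :=
  (fun y => !₂[1 / 2, y]) '' uIcc (combHeight k 0) (combHeight k (k - 1)) ∪
    ⋃ j ∈ Finset.range k, (fun x => !₂[x, combHeight k j]) '' uIcc 0 1

theorem mem_comb {k j : ℕ} (hj : j < k) {x : ℝ} (hx : x ∈ Icc 0 1) :
    !₂[x, combHeight k j] ∈ comb k :=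
  .inr <| mem_biUnion (Finset.mem_range.2 hj) ⟨x, Icc_subset_uIcc hx, rfl⟩

theorem isCompact_comb (k : ℕ) : IsCompact (comb k) :=
  (isCompact_uIcc.image (isometry_vertical _).continuous).union <|
    (Finset.range k).finite_toSet.isCompact_biUnion fun _ _ =>
      isCompact_uIcc.image (isometry_horizontal _).continuous

theorem isConnected_comb (k : ℕ) : IsConnected (comb k) := by
  refine (isConnected_image_uIcc (isometry_vertical _).continuous _ _).union_biUnion
    (s := (Finset.range k : Set ℕ)) (fun j _ => ?_) fun j hj => ?_
  · exact (isConnected_image_uIcc (isometry_horizontal _).continuous _ _).isPreconnected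
  · have hj : j ≤ k - 1 := by have := Finset.mem_range.1 hj; omega
    refine ⟨!₂[1 / 2, combHeight k j], ⟨_, Icc_subset_uIcc ?_, rfl⟩, ⟨_, ?_, rfl⟩⟩
    · exact ⟨combHeight_mono k j.zero_le, combHeight_mono k hj⟩
    · exact Icc_subset_uIcc ⟨by norm_num, by norm_num⟩

theorem one_sub_one_div_natCast_nonneg {k : ℕ} (hk : 0 < k) : 0 ≤ 1 - 1 / (k : ℝ) :=
  sub_nonneg.2 (div_le_one_of_le₀ (Nat.one_le_cast.2 hk) k.cast_nonneg)

theorem hausdorffMeasure_comb_le {k : ℕ} (hk : 0 < k) :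
    μH[1] (comb k) ≤ ENNReal.ofReal (1 - 1 / k + k) := by
  have hspine : combHeight k (k - 1) - combHeight k 0 = 1 - 1 / k := by
    rw [combHeight, combHeight, Nat.cast_sub hk]
    field_simp
    ring
  calc μH[1] (comb k)
      ≤ ENNReal.ofReal (1 - 1 / k) + ∑ j ∈ Finset.range k, ENNReal.ofReal 1 := by
        refine (measure_union_le _ _).trans (add_le_add (le_of_eq ?_) ?_)
        · rw [(isometry_vertical _).hausdorffMeasure_image_uIcc, hspine,
            abs_of_nonneg (one_sub_one_div_natCast_nonneg hk)]
        · refine (measure_biUnion_finset_le _ _).trans (Finset.sum_le_sum fun j _ => ?_)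
          rw [(isometry_horizontal _).hausdorffMeasure_image_uIcc, sub_zero, abs_one]
    _ = ENNReal.ofReal (1 - 1 / k + k) := by
        rw [Finset.sum_const, Finset.card_range, nsmul_eq_mul, ENNReal.ofReal_one, mul_one,
          ← ENNReal.ofReal_natCast,
          ← ENNReal.ofReal_add (one_sub_one_div_natCast_nonneg hk) k.cast_nonneg]

theorem one_sub_one_div_add_add_sq_div_le {s K : ℝ} (hK : 0 < K) (hKs : |K - s| ≤ 1) :
    1 - 1 / K + K + s ^ 2 / K ≤ 2 * s + 1 := by
  have hsq : (K - s) ^ 2 ≤ 1 := by nlinarith [abs_nonneg (K - s), sq_abs (K - s)]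
  rw [← sub_nonneg]
  have : 2 * s + 1 - (1 - 1 / K + K + s ^ 2 / K) = (1 - (K - s) ^ 2) / K := by
    field_simp
    ring
  rw [this]
  exact div_nonneg (by linarith) hK.le

theorem exists_comb_tree {k : ℕ} (hk : 0 < k) {P : Finset (EuclideanSpace ℝ (Fin 2))}
    (hPsq : ↑P ⊆ unitSquare) :
    ∃ S : Set (EuclideanSpace ℝ (Fin 2)), IsCompact S ∧ IsConnected S ∧ ↑P ⊆ S ∧
      μH[1] S ≤ ENNReal.ofReal (1 - 1 / k + k + P.card / (2 * k)) := by
  choose! j hjk hj using fun p (hp : p ∈ P) => exists_abs_sub_combHeight_le hk (hPsq hp 1)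
  set tooth := fun p : EuclideanSpace ℝ (Fin 2) =>
    (fun y => !₂[p 0, y]) '' uIcc (p 1) (combHeight k (j p))
  refine ⟨comb k ∪ ⋃ p ∈ P, tooth p, ?_, ?_, ?_, ?_⟩
  · exact (isCompact_comb k).union <| P.finite_toSet.isCompact_biUnion fun p _ =>
      isCompact_uIcc.image (isometry_vertical _).continuous
  · refine (isConnected_comb k).union_biUnion (s := (P : Set (EuclideanSpace ℝ (Fin 2))))
      (fun p _ => ?_) fun p hp => ?_
    · exact (isConnected_image_uIcc (isometry_vertical _).continuous _ _).isPreconnected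
    · exact ⟨_, mem_comb (hjk p hp) (hPsq hp 0), _, right_mem_uIcc, rfl⟩
  · exact fun p hp => .inr <| mem_biUnion hp ⟨p 1, left_mem_uIcc, vec2_eta p⟩
  calc μH[1] (comb k ∪ ⋃ p ∈ P, tooth p)
      ≤ ENNReal.ofReal (1 - 1 / k + k) + ∑ p ∈ P, ENNReal.ofReal (1 / (2 * k)) := by
        refine (measure_union_le _ _).trans (add_le_add (hausdorffMeasure_comb_le hk) ?_)
        refine (measure_biUnion_finset_le _ _).trans (Finset.sum_le_sum fun p hp => ?_)
        rw [(isometry_vertical _).hausdorffMeasure_image_uIcc, abs_sub_comm]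
        exact ENNReal.ofReal_le_ofReal (hj p hp)
    _ = ENNReal.ofReal (1 - 1 / k + k + P.card / (2 * k)) := by
        rw [← ENNReal.ofReal_sum_of_nonneg (fun _ _ => by positivity), Finset.sum_const,
          nsmul_eq_mul, mul_one_div,
          ← ENNReal.ofReal_add (add_nonneg (one_sub_one_div_natCast_nonneg hk) k.cast_nonneg)
            (by positivity)]

theorem steiner_tree_in_square_upper_bound (n : ℕ)
    (P : Finset (EuclideanSpace ℝ (Fin 2))) (hPne : P.Nonempty)
    (hPsq : ↑P ⊆ unitSquare) (hcard : P.card = n) :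
    ∃ S : Set (EuclideanSpace ℝ (Fin 2)), IsCompact S ∧ IsConnected S ∧ ↑P ⊆ S ∧
      μH[1] S ≤ ENNReal.ofReal (Real.sqrt (2 * n) + 7 / 4) := by
  have hn : (0 : ℝ) < n := by exact_mod_cast hcard ▸ hPne.card_pos
  set s := √(2 * n) / 2 with hs_def
  have hs : 0 < s := by positivity
  have hk : 0 < ⌈s⌉₊ := Nat.ceil_pos.2 hs
  have hks : |(⌈s⌉₊ : ℝ) - s| ≤ 1 :=
    abs_le.2 ⟨by linarith [Nat.le_ceil s], by linarith [Nat.ceil_lt_add_one hs.le]⟩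
  have hteeth : (n : ℝ) / (2 * ⌈s⌉₊) = s ^ 2 / ⌈s⌉₊ := by
    rw [div_pow, Real.sq_sqrt (by positivity)]
    ring
  obtain ⟨S, hS, hSconn, hPS, hSlen⟩ := exists_comb_tree hk hPsq
  refine ⟨S, hS, hSconn, hPS, hSlen.trans (ENNReal.ofReal_le_ofReal ?_)⟩
  rw [hcard, hteeth]
  linarith [one_sub_one_div_add_add_sq_div_le (Nat.cast_pos.2 hk) hks]
end

section
/- There exists a constant c > 0 such that for every integer n ≥ 1 there exists a set P ⊆ [0,1]² ⊆ ℝ² with #P = n such that every compact connected set S ⊆ ℝ² with P ⊆ S satisfies H¹(S) ≥ c · (√n − 1). (In particular, the maximal possible length of a Steiner tree for n points in the unit square grows at least like a constant times √n.) -/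
/-!
Place the `n` points on a square grid of mesh `1/m` with `m = ⌊√n⌋ + 1`, so that any two of them
are at distance at least `1/m`. If a connected set `S` contains the points, then around each point
`p`, the distance to `p` maps the part of `S` inside the ball of radius `1/(2m)` onto an interval
of that length, and this map is `1`-Lipschitz. The `n` balls are disjoint, so
`H¹(S) ≥ n / (2m) ≥ (√n - 1) / 2`.
-/

open MeasureTheory Metric Set

section HausdorffMeasure

variable {E : Type*} [MetricSpace E] [MeasurableSpace E] [BorelSpace E] {S : Set E}

lemma ofReal_le_hausdorffMeasure_inter_ball (hS : IsPreconnected S) {x y : E} (hx : x ∈ S)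
    (hy : y ∈ S) {r : ℝ} (hr : r ≤ dist x y) :
    ENNReal.ofReal r ≤ μH[1] (S ∩ ball x r) := by
  have hlip : LipschitzWith 1 (dist x) := LipschitzWith.dist_right x
  have hIco : Ico 0 r ⊆ dist x '' (S ∩ ball x r) := by
    intro t ht
    obtain ⟨z, hzS, rfl⟩ := (hS.image _ hlip.continuous.continuousOn).Icc_subset
      ⟨x, hx, dist_self x⟩ ⟨y, hy, rfl⟩ ⟨ht.1, ht.2.le.trans hr⟩
    exact ⟨z, ⟨hzS, mem_ball'.2 ht.2⟩, rfl⟩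
  calc ENNReal.ofReal r = μH[1] (Ico (0 : ℝ) r) := by
        rw [hausdorffMeasure_real, Real.volume_Ico, sub_zero]
    _ ≤ μH[1] (dist x '' (S ∩ ball x r)) := measure_mono hIco
    _ ≤ μH[1] (S ∩ ball x r) := by
        simpa using hlip.hausdorffMeasure_image_le zero_le_one (S ∩ ball x r)

lemma card_mul_ofReal_le_hausdorffMeasure (hS : IsPreconnected S) {P : Finset E}
    (hPS : ↑P ⊆ S) (hP : 1 < P.card) {δ : ℝ}
    (hsep : (P : Set E).Pairwise fun p q => δ ≤ dist p q) :
    P.card * ENNReal.ofReal (δ / 2) ≤ μH[1] S := by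
  have hball : ∀ p ∈ P, ENNReal.ofReal (δ / 2) ≤ μH[1].restrict S (ball p (δ / 2)) := by
    intro p hp
    obtain ⟨q, hq, hqp⟩ := P.exists_mem_ne hP p
    rw [Measure.restrict_apply measurableSet_ball, inter_comm]
    exact ofReal_le_hausdorffMeasure_inter_ball hS (hPS hp) (hPS hq)
      (by linarith [hsep hp hq hqp.symm, dist_nonneg (x := p) (y := q)])
  have hdisj : (P : Set E).PairwiseDisjoint (ball · (δ / 2)) := fun p hp q hq hpq =>
    ball_disjoint_ball (by linarith [hsep hp hq hpq])
  calc P.card * ENNReal.ofReal (δ / 2) = ∑ p ∈ P, ENNReal.ofReal (δ / 2) := by simp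
    _ ≤ ∑ p ∈ P, μH[1].restrict S (ball p (δ / 2)) := Finset.sum_le_sum hball
    _ = μH[1].restrict S (⋃ p ∈ P, ball p (δ / 2)) :=
        (measure_biUnion_finset hdisj fun _ _ => measurableSet_ball).symm
    _ ≤ μH[1].restrict S univ := measure_mono (subset_univ _)
    _ = μH[1] S := Measure.restrict_apply_univ S

end HausdorffMeasure

section Grid

variable {ι : Type*}

lemma one_le_dist_toLp_natCast [Fintype ι] {v w : ι → ℕ} (hvw : v ≠ w) :
    1 ≤ dist (WithLp.toLp 2 fun i => (v i : ℝ)) (WithLp.toLp 2 fun i => (w i : ℝ)) := by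
  obtain ⟨i, hi⟩ := Function.ne_iff.1 hvw
  have hint : (1 : ℤ) ≤ |(v i : ℤ) - w i| := Int.one_le_abs (sub_ne_zero.2 (by exact_mod_cast hi))
  calc (1 : ℝ) ≤ |(v i : ℝ) - w i| := by exact_mod_cast hint
    _ = dist (v i : ℝ) (w i) := (Real.dist_eq _ _).symm
    _ ≤ _ := PiLp.dist_apply_le (WithLp.toLp 2 fun i => (v i : ℝ))
        (WithLp.toLp 2 fun i => (w i : ℝ)) i

noncomputable def gridPoint (m : ℕ) (v : ι → Fin m) : EuclideanSpace ℝ ι :=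
  (m : ℝ)⁻¹ • WithLp.toLp 2 fun i => ((v i : ℕ) : ℝ)

lemma gridPoint_apply_mem_Icc {m : ℕ} (v : ι → Fin m) (i : ι) :
    gridPoint m v i ∈ Icc (0 : ℝ) 1 := by
  have hm : (0 : ℝ) < m := by exact_mod_cast (v i).pos
  simp only [gridPoint, PiLp.smul_apply, smul_eq_mul, inv_mul_eq_div]
  exact ⟨by positivity, div_le_one_of_le₀ (by exact_mod_cast (v i).isLt.le) hm.le⟩

lemma inv_le_dist_gridPoint [Fintype ι] {m : ℕ} {v w : ι → Fin m} (hvw : v ≠ w) :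
    (m : ℝ)⁻¹ ≤ dist (gridPoint m v) (gridPoint m w) := by
  have hvw' : (fun i => (v i : ℕ)) ≠ fun i => (w i : ℕ) := fun h =>
    hvw (funext fun i => Fin.ext (congrFun h i))
  rw [gridPoint, gridPoint, dist_smul₀, Real.norm_of_nonneg (by positivity)]
  exact le_mul_of_one_le_right (by positivity) (one_le_dist_toLp_natCast hvw')

lemma gridPoint_injective [Fintype ι] (m : ℕ) : Function.Injective (gridPoint (ι := ι) m) := by
  intro v w h
  by_contra hvw
  have hm : (0 : ℝ) < m := by
    obtain ⟨i, -⟩ := Function.ne_iff.1 hvw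
    exact_mod_cast (v i).pos
  have := inv_le_dist_gridPoint hvw
  rw [h, dist_self] at this
  exact (inv_pos.2 hm).not_ge this

end Grid

lemma sqrt_sub_one_mul_le (n : ℕ) : (√n - 1) * (n.sqrt + 1) ≤ n := by
  have hk : (n.sqrt : ℝ) ≤ √n := Real.nat_sqrt_le_real_sqrt
  have hsq : √n ^ 2 = n := Real.sq_sqrt n.cast_nonneg
  nlinarith [Real.sqrt_nonneg n, (n.sqrt).cast_nonneg (α := ℝ)]

theorem steiner_tree_in_square_lower_bound :
    ∃ c : ℝ, 0 < c ∧ ∀ n : ℕ, 1 ≤ n →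
      ∃ P : Finset (EuclideanSpace ℝ (Fin 2)), ↑P ⊆ unitSquare ∧ P.card = n ∧
        ∀ S : Set (EuclideanSpace ℝ (Fin 2)), IsCompact S → IsConnected S → ↑P ⊆ S →
          ENNReal.ofReal (c * (Real.sqrt n - 1)) ≤ μH[1] S := by
  refine ⟨1 / 2, by norm_num, fun n hn => ?_⟩
  set m := n.sqrt + 1
  have hnm : n ≤ (Finset.univ : Finset (Fin 2 → Fin m)).card := by
    simpa [sq] using (Nat.lt_succ_sqrt' n).le
  obtain ⟨V, -, hV⟩ := Finset.exists_subset_card_eq hnm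
  set P := V.map ⟨gridPoint m, gridPoint_injective m⟩
  refine ⟨P, ?_, by simp [P, hV], fun S _ hS hPS => ?_⟩
  · intro x hx
    obtain ⟨v, -, rfl⟩ := Finset.mem_map.1 hx
    intro i
    exact gridPoint_apply_mem_Icc v i
  rcases hn.eq_or_lt with rfl | hn
  · simp
  have hsep : (P : Set (EuclideanSpace ℝ (Fin 2))).Pairwise fun p q => (m : ℝ)⁻¹ ≤ dist p q := by
    rintro _ hp _ hq hpq
    obtain ⟨v, -, rfl⟩ := Finset.mem_map.1 hp
    obtain ⟨w, -, rfl⟩ := Finset.mem_map.1 hq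
    exact inv_le_dist_gridPoint (ne_of_apply_ne _ hpq)
  calc ENNReal.ofReal (1 / 2 * (√n - 1)) ≤ n * ENNReal.ofReal ((m : ℝ)⁻¹ / 2) := by
        rw [← ENNReal.ofReal_natCast, ← ENNReal.ofReal_mul n.cast_nonneg]
        refine ENNReal.ofReal_le_ofReal ?_
        field_simp
        push_cast [m]
        rw [le_div_iff₀ (by positivity)]
        exact sqrt_sub_one_mul_le n
    _ ≤ μH[1] S := by
        simpa [P, hV] using card_mul_ofReal_le_hausdorffMeasure hS.isPreconnected hPS
          (by simpa [P, hV] using hn) hsep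
end
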